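/- arXiv:2502.06629 — 2 statements merged into one kernel-verified Lean document; each statement's English description precedes it below -/
import Mathlib

section
/- Let X = [n₁] × ⋯ × [n_d], let σ be a permutation of X, and suppose the edges e_x = (π(x), π(σ(x))) of the associated bipartite multigraph are partitioned into n_d perfect matchings M₁, …, M_{n_d}, with ℓ_x the index of the matching containing e_x. Then the map σ₁ : X → X defined by σ₁(x) = (π(x), ℓ_x) is a permutation of X that is one-dimensional in direction d. -/
/-- Let `X = [n₁] × ⋯ × [n_d]`, `σ` a permutation of `X`, `π : X → Y` the projection forgetting
the last coordinate, and suppose the edges `e_x = (π x, π (σ x))` of the associated bipartite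
multigraph are partitioned into `n_d` perfect matchings `M₁, …, M_{n_d}`, with `ℓ x` the index of
the matching containing `e_x` (so that for each index `k` and each `u ∈ Y` there is exactly one
`x` with `ℓ x = k` and `π x = u`, and exactly one `x` with `ℓ x = k` and `π (σ x) = u`).
Then `σ₁ : X → X` defined by `σ₁ x = (π x, ℓ x)`, i.e. updating the last coordinate of `x` to
`ℓ x`, is a permutation of `X`, and it is one-dimensional in direction `d`. -/
theorem stmt_4 (d : ℕ) (hd : 2 ≤ d) (n : Fin d → ℕ) (σ : Equiv.Perm (∀ i, Fin (n i)))
    (π : (∀ i, Fin (n i)) → (∀ i : Fin (d - 1), Fin (n (Fin.castLE (Nat.sub_le d 1) i))))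
    (hπ : ∀ x i, π x i = x (Fin.castLE (Nat.sub_le d 1) i))
    (ℓ : (∀ i, Fin (n i)) → Fin (n ⟨d - 1, by omega⟩))
    (hmatchL : ∀ (k : Fin (n ⟨d - 1, by omega⟩)) u, ∃! x, ℓ x = k ∧ π x = u)
    (hmatchR : ∀ (k : Fin (n ⟨d - 1, by omega⟩)) v, ∃! x, ℓ x = k ∧ π (σ x) = v) :
    Function.Bijective
      (fun x : ∀ i, Fin (n i) => Function.update x (⟨d - 1, by omega⟩ : Fin d) (ℓ x)) ∧
    ∀ (x : ∀ i, Fin (n i)) (j : Fin d), j ≠ ⟨d - 1, by omega⟩ →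
      Function.update x (⟨d - 1, by omega⟩ : Fin d) (ℓ x) j = x j := by
  have hd1 : d - 1 < d := by omega
  -- π of an update at the last coordinate is unchanged
  have hπupd : ∀ (x : ∀ i, Fin (n i)) (v : Fin (n ⟨d - 1, hd1⟩)),
      π (Function.update x ⟨d - 1, hd1⟩ v) = π x := by
    intro x v
    funext i
    rw [hπ, hπ]
    apply Function.update_of_ne
    intro h
    have : (Fin.castLE (Nat.sub_le d 1) i).val = d - 1 := by rw [h]
    simp only [Fin.coe_castLE] at this
    omega
  -- extensionality via π and last coordinate
  have hext : ∀ x y : (∀ i, Fin (n i)), π x = π y →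
      x ⟨d - 1, hd1⟩ = y ⟨d - 1, hd1⟩ → x = y := by
    intro x y h1 h2
    funext j
    by_cases hj : j = (⟨d - 1, hd1⟩ : Fin d)
    · subst hj; exact h2
    · have hjv : j.val < d - 1 := by
        have h3 := j.isLt
        have : j.val ≠ d - 1 := fun h => hj (Fin.ext h)
        omega
      have h4 := congrFun h1 ⟨j.val, hjv⟩
      rw [hπ, hπ] at h4
      convert h4 <;> simp [Fin.ext_iff]
  constructor
  · constructor
    · intro x y hxy
      simp only at hxy
      have h1 : π x = π y := by
        rw [← hπupd x (ℓ x), ← hπupd y (ℓ y), hxy]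
      have h2 : ℓ x = ℓ y := by
        have hx := Function.update_self (⟨d - 1, hd1⟩ : Fin d) (ℓ x) x
        have hy := Function.update_self (⟨d - 1, hd1⟩ : Fin d) (ℓ y) y
        rw [← hx, ← hy, hxy]
      obtain ⟨z, hz, huniq⟩ := hmatchL (ℓ x) (π x)
      have hxz := huniq x ⟨rfl, rfl⟩
      have hyz := huniq y ⟨h2.symm, h1.symm⟩
      rw [hxz, hyz]
    · intro y
      obtain ⟨x, ⟨hx1, hx2⟩, _⟩ := hmatchL (y ⟨d - 1, hd1⟩) (π y)
      refine ⟨x, ?_⟩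
      apply hext
      · rw [hπupd, hx2]
      · show Function.update x ⟨d - 1, hd1⟩ (ℓ x) ⟨d - 1, hd1⟩ = y ⟨d - 1, hd1⟩
        rw [Function.update_self, hx1]
  · intro x j hj
    exact Function.update_of_ne hj _ _
end

section
/- Let G be a 3-regular graph on 2n vertices, with 45·2^d/d ≤ 2n ≤ 50·2^d/d, satisfying the expansion property that |N(S)| ≥ 0.18|S| for all S ⊆ V(G) with |S| ≤ n. Then for all sufficiently large d, G is not a minor of the hypercube Q_d. -/
/-- The `d`-dimensional hypercube graph. -/
def hypercube (d : ℕ) : SimpleGraph (Fin d → Bool) where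
  Adj x y := (Finset.univ.filter fun i => x i ≠ y i).card = 1
  symm := ⟨by intro x y h; simpa [ne_comm] using h⟩
  loopless := ⟨by intro x h; simp at h⟩

/-- `H` is a minor of `G` (branch-set formulation). -/
def IsMinor {α β : Type*} (H : SimpleGraph α) (G : SimpleGraph β) : Prop :=
  ∃ B : α → Set β,
    (∀ v, (B v).Nonempty) ∧
    (∀ v, (G.induce (B v)).Connected) ∧
    (Pairwise fun u v => Disjoint (B u) (B v)) ∧
    (∀ u v, H.Adj u v → ∃ a ∈ B u, ∃ b ∈ B v, G.Adj a b)

/-- External neighbourhood. -/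
def extNbhd {α : Type*} (G : SimpleGraph α) (S : Set α) : Set α :=
  {w | w ∉ S ∧ ∃ v ∈ S, G.Adj v w}

/-!
Fixing one vertex in each branch set of a minor model of `G` in `Q_d` gives an injection `x` of
`V(G)` into the cube. Branch sets are connected and disjoint, so an edge `vw` is stretched to
Hamming length at most `|B_v| + |B_w|`, and the total length of the ordered edges is at most
`6 · 2^d`. In each coordinate the minority side `F_i` has at most `n` vertices, so by expansion at
least `0.36 |F_i|` ordered edges change that coordinate. A Hamming ball of radius `12d/25` has
volume `o(2^d / d)`, so almost all pairs of images are far apart; counting the distances of all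
pairs coordinatewise gives `∑ |F_i| (2n - |F_i|) ≥ 0.95 n² d`, and Cauchy–Schwarz turns this into
`∑ |F_i| ≥ 0.777 n d`. The total edge length is then at least `0.279 n d`, whereas
`6 · 2^d ≤ 0.267 n d` by the lower bound on `n`.
-/

open Finset

lemma hammingDist_le_walk_length {d : ℕ} {x y : Fin d → Bool} (p : (hypercube d).Walk x y) :
    hammingDist x y ≤ p.length := by
  induction p with
  | nil => simp
  | @cons u v w huv _ ih =>
    have huv1 : hammingDist u v = 1 := huv
    grw [hammingDist_triangle u v w, SimpleGraph.Walk.length_cons, huv1, ih, add_comm]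

lemma hammingDist_lt_ncard_of_connected {d : ℕ} {s : Set (Fin d → Bool)}
    (hs : ((hypercube d).induce s).Connected) {a b : Fin d → Bool} (ha : a ∈ s) (hb : b ∈ s) :
    hammingDist a b < s.ncard := by
  classical
  obtain ⟨w⟩ := hs.preconnected ⟨a, ha⟩ ⟨b, hb⟩
  let p := w.toPath
  calc hammingDist a b ≤ (p.1.map (SimpleGraph.Embedding.induce s).toHom).length :=
        hammingDist_le_walk_length _
    _ = p.1.length := SimpleGraph.Walk.length_map _ _
    _ < Fintype.card s := p.2.length_lt
    _ = s.ncard := by rw [Set.ncard_eq_toFinset_card', Set.toFinset_card]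

lemma card_filter_hammingDist_le_le (d r : ℕ) (c : Fin d → Bool) :
    #{y | hammingDist c y ≤ r} ≤ ∑ j ∈ range (r + 1), d.choose j := by
  let flip (s : Finset (Fin d)) : Fin d → Bool := fun i => if i ∈ s then !c i else c i
  have hball : ({y | hammingDist c y ≤ r} : Finset (Fin d → Bool)) ⊆
      ((range (r + 1)).biUnion fun j => powersetCard j univ).image flip := by
    intro y hy
    rw [mem_filter] at hy
    refine mem_image.2 ⟨({i | c i ≠ y i} : Finset (Fin d)), ?_, ?_⟩
    · simp only [mem_biUnion, mem_range, mem_powersetCard, subset_univ, true_and]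
      exact ⟨_, Nat.lt_succ_of_le hy.2, rfl⟩
    · funext i
      cases hc : c i <;> cases hy : y i <;> simp [flip, hc, hy]
  calc _ ≤ _ := card_le_card hball
    _ ≤ _ := card_image_le
    _ ≤ ∑ j ∈ range (r + 1), #(powersetCard j (univ : Finset (Fin d))) := card_biUnion_le
    _ = _ := by simp

lemma sum_range_choose_mul_pow_le {t : ℝ} (ht0 : 0 ≤ t) (ht1 : t ≤ 1) {d k : ℕ} (hk : k ≤ d) :
    (∑ j ∈ range (k + 1), (d.choose j : ℝ)) * t ^ k ≤ (1 + t) ^ d := by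
  calc (∑ j ∈ range (k + 1), (d.choose j : ℝ)) * t ^ k
      = ∑ j ∈ range (k + 1), d.choose j * t ^ k := sum_mul _ _ _
    _ ≤ ∑ j ∈ range (k + 1), d.choose j * t ^ j := sum_le_sum fun j hj =>
      mul_le_mul_of_nonneg_left
        (pow_le_pow_of_le_one ht0 ht1 (Nat.lt_succ_iff.1 (mem_range.1 hj))) (by positivity)
    _ ≤ ∑ j ∈ range (d + 1), d.choose j * t ^ j :=
      sum_le_sum_of_subset_of_nonneg (range_subset_range.2 (by omega)) fun _ _ _ => by positivity
    _ = (1 + t) ^ d := by rw [add_comm 1 t, add_pow]; simp [mul_comm]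

-- `t = 12/13 = k/(d-k)` at `k = 12d/25` is the optimal choice in the bound above.
lemma sum_range_choose_pow_le {d k : ℕ} (hk : 25 * k ≤ 12 * d) :
    (∑ j ∈ range (k + 1), (d.choose j : ℝ)) ^ 25 * (12 / 13) ^ (12 * d) ≤ ((25 / 13) ^ 25) ^ d := by
  have h := sum_range_choose_mul_pow_le (t := 12 / 13) (by norm_num) (by norm_num)
    (by omega : k ≤ d)
  calc (∑ j ∈ range (k + 1), (d.choose j : ℝ)) ^ 25 * (12 / 13) ^ (12 * d)
      ≤ (∑ j ∈ range (k + 1), (d.choose j : ℝ)) ^ 25 * (12 / 13) ^ (25 * k) :=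
        mul_le_mul_of_nonneg_left
          (pow_le_pow_of_le_one (by norm_num) (by norm_num) hk) (by positivity)
    _ = ((∑ j ∈ range (k + 1), (d.choose j : ℝ)) * (12 / 13) ^ k) ^ 25 := by ring
    _ ≤ ((1 + 12 / 13) ^ d) ^ 25 := by gcongr
    _ = ((25 / 13) ^ 25) ^ d := by rw [← pow_mul, ← pow_mul, mul_comm]; norm_num

lemma eventually_sum_range_choose_mul_le {ε : ℝ} (hε : 0 < ε) :
    ∀ᶠ d : ℕ in Filter.atTop,
      (∑ j ∈ range (12 * d / 25 + 1), (d.choose j : ℝ)) * d ≤ ε * 2 ^ d := by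
  set q : ℝ := (25 / 13) ^ 25 / ((12 / 13) ^ 12 * 2 ^ 25)
  have hq : |q| < 1 := by norm_num [q, abs_of_pos]
  filter_upwards [(tendsto_pow_const_mul_const_pow_of_abs_lt_one 25 hq).eventually_le_const
    (pow_pos hε 25)] with d hd
  set V := ∑ j ∈ range (12 * d / 25 + 1), (d.choose j : ℝ)
  have hV := sum_range_choose_pow_le (d := d) (k := 12 * d / 25) (by omega)
  refine le_of_pow_le_pow_left₀ (n := 25) (by norm_num) (by positivity) ?_
  have hsplit : ((25 / 13 : ℝ) ^ 25) ^ d = q ^ d * ((12 / 13) ^ (12 * d) * (2 ^ d) ^ 25) := by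
    rw [pow_mul, ← pow_mul 2 d 25, mul_comm d 25, pow_mul, ← mul_pow, ← mul_pow]
    congr 1
    exact (div_mul_cancel₀ _ (by positivity)).symm
  refine le_of_mul_le_mul_right ?_ (by positivity : (0 : ℝ) < (12 / 13) ^ (12 * d))
  calc (V * d) ^ 25 * (12 / 13) ^ (12 * d) = V ^ 25 * (12 / 13) ^ (12 * d) * d ^ 25 := by ring
    _ ≤ ((25 / 13 : ℝ) ^ 25) ^ d * d ^ 25 := by gcongr
    _ = (d ^ 25 * q ^ d) * (2 ^ d) ^ 25 * (12 / 13) ^ (12 * d) := by rw [hsplit]; ring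
    _ ≤ ε ^ 25 * (2 ^ d) ^ 25 * (12 / 13) ^ (12 * d) := by gcongr
    _ = (ε * 2 ^ d) ^ 25 * (12 / 13) ^ (12 * d) := by ring

lemma sum_hammingDist_eq_sum_card {κ ι β : Type*} [Fintype ι] [DecidableEq β] (s : Finset κ)
    (f g : κ → ι → β) :
    ∑ p ∈ s, hammingDist (f p) (g p) = ∑ i, #{p ∈ s | f p i ≠ g p i} := by
  simp only [hammingDist, card_filter]
  exact sum_comm

section Graph

variable {α : Type*} [Fintype α] {G : SimpleGraph α} [DecidableRel G.Adj]

lemma sum_adj_pairs_fst_eq (f : α → ℕ) :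
    ∑ p ∈ ({p | G.Adj p.1 p.2} : Finset (α × α)), f p.1 = ∑ v, G.degree v * f v := by
  rw [sum_filter, Fintype.sum_prod_type]
  refine sum_congr rfl fun v _ => ?_
  dsimp only
  rw [← sum_filter, sum_const, smul_eq_mul, ← G.card_neighborFinset_eq_degree,
    G.neighborFinset_eq_filter]

lemma sum_adj_pairs_snd_eq_fst (f : α → ℕ) :
    ∑ p ∈ ({p | G.Adj p.1 p.2} : Finset (α × α)), f p.2 =
      ∑ p ∈ ({p | G.Adj p.1 p.2} : Finset (α × α)), f p.1 :=
  sum_equiv (Equiv.prodComm α α) (by simp [G.adj_comm]) (by simp)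

lemma sum_adj_pairs_add_le {k : ℕ} (hdeg : ∀ v, G.degree v ≤ k) (f : α → ℕ) :
    ∑ p ∈ ({p | G.Adj p.1 p.2} : Finset (α × α)), (f p.1 + f p.2) ≤ 2 * k * ∑ v, f v := by
  rw [sum_add_distrib, sum_adj_pairs_snd_eq_fst, sum_adj_pairs_fst_eq, ← two_mul, mul_assoc,
    mul_sum _ _ k]
  exact Nat.mul_le_mul_left 2 (sum_le_sum fun v _ => Nat.mul_le_mul_right _ (hdeg v))

lemma IsMinor.exists_injective_sum_hammingDist_le {d k : ℕ} (h : IsMinor G (hypercube d))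
    (hdeg : ∀ v, G.degree v ≤ k) :
    ∃ x : α → Fin d → Bool, Function.Injective x ∧
      ∑ p ∈ ({p | G.Adj p.1 p.2} : Finset (α × α)), hammingDist (x p.1) (x p.2) ≤
        2 * k * 2 ^ d := by
  obtain ⟨B, hne, hconn, hdisj, hadj⟩ := h
  refine ⟨fun v => (hne v).some, fun u v huv => ?_, ?_⟩
  · by_contra h
    have hv := (hne v).some_mem
    rw [← show (hne u).some = (hne v).some from huv] at hv
    exact Set.disjoint_left.1 (hdisj h) (hne u).some_mem hv
  have hedge : ∀ v w, G.Adj v w →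
      hammingDist (hne v).some (hne w).some ≤ (B v).ncard + (B w).ncard := by
    intro v w hvw
    obtain ⟨a, ha, b, hb, hab⟩ := hadj v w hvw
    have hva := hammingDist_lt_ncard_of_connected (hconn v) (hne v).some_mem ha
    have hbw := hammingDist_lt_ncard_of_connected (hconn w) hb (hne w).some_mem
    have hab1 : hammingDist a b = 1 := hab
    grw [hammingDist_triangle _ a, hammingDist_triangle a b, hab1]
    omega
  have hvol : ∑ v, (B v).ncard ≤ 2 ^ d := by
    rw [← finsum_eq_sum_of_fintype, ← Set.ncard_iUnion_of_finite (fun _ => Set.toFinite _) hdisj]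
    simpa using Set.ncard_le_card (⋃ v, B v)
  calc _ ≤ ∑ p ∈ ({p | G.Adj p.1 p.2} : Finset (α × α)), ((B p.1).ncard + (B p.2).ncard) :=
        sum_le_sum fun p hp => hedge _ _ (mem_filter.1 hp).2
    _ ≤ 2 * k * ∑ v, (B v).ncard := sum_adj_pairs_add_le hdeg fun v => (B v).ncard
    _ ≤ 2 * k * 2 ^ d := by gcongr

lemma two_mul_card_extNbhd_le (c : α → Bool) (b : Bool) :
    2 * Nat.card (extNbhd G {v | c v = b}) ≤ #{p : α × α | G.Adj p.1 p.2 ∧ c p.1 ≠ c p.2} := by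
  classical
  set A : Finset (α × α) := {p | G.Adj p.1 p.2 ∧ c p.1 = b ∧ c p.2 ≠ b}
  have hA : Nat.card (extNbhd G {v | c v = b}) ≤ #A := by
    have hsub : extNbhd G {v | c v = b} ⊆ ↑(A.image Prod.snd) := by
      rintro w ⟨hw, v, hv, hvw⟩
      exact mem_image.2 ⟨(v, w), by simp_all [A], rfl⟩
    rw [Nat.card_coe_set_eq]
    grw [Set.ncard_le_ncard hsub, Set.ncard_coe_finset, card_image_le]
  have hdisj : Disjoint A (A.image Prod.swap) := by
    simp only [A, disjoint_left, mem_image, mem_filter, mem_univ, true_and]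
    rintro _ ⟨-, h1, -⟩ ⟨q, ⟨-, -, h2⟩, rfl⟩
    exact h2 h1
  calc 2 * Nat.card (extNbhd G {v | c v = b}) ≤ #A + #(A.image Prod.swap) := by
        rw [card_image_of_injective _ Prod.swap_injective]; omega
    _ = #(A ∪ A.image Prod.swap) := (card_union_of_disjoint hdisj).symm
    _ ≤ _ := card_le_card fun p hp => by
        simp only [A, mem_union, mem_image, mem_filter, mem_univ, true_and] at hp ⊢
        rcases hp with ⟨hadj, h1, h2⟩ | ⟨q, ⟨hadj, h1, h2⟩, rfl⟩
        · exact ⟨hadj, by rwa [h1, ne_comm]⟩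
        · exact ⟨hadj.symm, by rwa [Prod.fst_swap, Prod.snd_swap, h1]⟩

lemma mul_sum_card_le_sum_hammingDist_of_expansion {ι : Type*} [Fintype ι] {n : ℕ} {β : ℝ}
    (hexp : ∀ S : Set α, Nat.card S ≤ n → β * Nat.card S ≤ Nat.card (extNbhd G S))
    (x : α → ι → Bool) (b : ι → Bool) (hb : ∀ i, #{v | x v i = b i} ≤ n) :
    2 * β * ∑ i, (#{v | x v i = b i} : ℝ) ≤
      ∑ p ∈ ({p | G.Adj p.1 p.2} : Finset (α × α)), hammingDist (x p.1) (x p.2) := by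
  rw [sum_hammingDist_eq_sum_card, mul_sum]
  push_cast
  refine sum_le_sum fun i _ => ?_
  have hcard : Nat.card {v | x v i = b i} = #{v | x v i = b i} := by
    rw [Nat.card_coe_set_eq, Set.ncard_eq_toFinset_card', Set.toFinset_ofPred]
  have hcut := two_mul_card_extNbhd_le (G := G) (fun v => x v i) (b i)
  rw [filter_filter]
  calc 2 * β * (#{v | x v i = b i} : ℝ)
      = 2 * (β * Nat.card {v | x v i = b i}) := by rw [hcard]; ring
    _ ≤ 2 * Nat.card (extNbhd G {v | x v i = b i}) := by
      gcongr
      exact hexp _ (hcard ▸ hb i)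
    _ ≤ _ := by exact_mod_cast hcut

end Graph

-- `∑ mᵢ (2n - mᵢ) = |s| n² - ∑ (n - mᵢ)²`, and Cauchy–Schwarz bounds `∑ (n - mᵢ)`.
lemma sub_mul_card_le_sum_of_le_sum_mul_sub {ι : Type*} (s : Finset ι) (m : ι → ℝ) {n ε : ℝ}
    (hn : 0 ≤ n) (hε : 0 ≤ ε) (h : (1 - ε ^ 2) * n ^ 2 * #s ≤ ∑ i ∈ s, m i * (2 * n - m i)) :
    (1 - ε) * n * #s ≤ ∑ i ∈ s, m i := by
  have hsq : ∑ i ∈ s, (n - m i) ^ 2 ≤ ε ^ 2 * n ^ 2 * #s := by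
    have : ∑ i ∈ s, (n - m i) ^ 2 = n ^ 2 * #s - ∑ i ∈ s, m i * (2 * n - m i) := by
      rw [eq_sub_iff_add_eq, ← sum_add_distrib, ← nsmul_eq_mul', ← sum_const]
      exact sum_congr rfl fun i _ => by ring
    linarith
  have hdev : ∑ i ∈ s, (n - m i) ≤ ε * n * #s := by
    refine le_of_sq_le_sq ?_ (by positivity)
    calc (∑ i ∈ s, (n - m i)) ^ 2 ≤ #s * ∑ i ∈ s, (n - m i) ^ 2 := sq_sum_le_card_mul_sum_sq
      _ ≤ #s * (ε ^ 2 * n ^ 2 * #s) := by gcongr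
      _ = (ε * n * #s) ^ 2 := by ring
  rw [sum_sub_distrib, sum_const, nsmul_eq_mul] at hdev
  linarith

section Pairs

variable {α : Type*} [Fintype α] {d : ℕ} {x : α → Fin d → Bool}

lemma card_pairs_ne_eq (c : α → Bool) (b : Bool) :
    #{p : α × α | c p.1 ≠ c p.2} = 2 * (#{v | c v = b} * #{v | c v ≠ b}) := by
  classical
  set S : Finset α := {v | c v = b}
  set T : Finset α := {v | c v ≠ b}
  have hsplit : ({p : α × α | c p.1 ≠ c p.2} : Finset (α × α)) = S ×ˢ T ∪ T ×ˢ S := by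
    ext p
    simp only [S, T, mem_filter, mem_univ, true_and, mem_union, mem_product]
    cases c p.1 <;> cases c p.2 <;> cases b <;> simp
  rw [hsplit, card_union_of_disjoint, card_product, card_product]
  · ring
  · simp +contextual [S, T, disjoint_left]

lemma card_sub_mul_le_sum_hammingDist (hx : Function.Injective x) (c : Fin d → Bool) (r : ℕ) :
    ((Fintype.card α : ℝ) - ∑ j ∈ range (r + 1), (d.choose j : ℝ)) * (r + 1) ≤
      ∑ v, (hammingDist c (x v) : ℝ) := by
  classical
  set C : Finset α := {v | hammingDist c (x v) ≤ r}
  have hC : #C ≤ ∑ j ∈ range (r + 1), d.choose j :=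
    (card_le_card_of_injOn x (fun v hv => by simpa [C] using hv) hx.injOn).trans
      (card_filter_hammingDist_le_le d r c)
  have hfar : #Cᶜ • (r + 1) ≤ ∑ v ∈ Cᶜ, hammingDist c (x v) :=
    card_nsmul_le_sum _ _ _ fun v hv => by simpa [C] using hv
  have hCc : (#Cᶜ : ℝ) = Fintype.card α - #C := by
    rw [card_compl, Nat.cast_sub (card_le_univ C)]
  calc ((Fintype.card α : ℝ) - ∑ j ∈ range (r + 1), (d.choose j : ℝ)) * (r + 1)
      ≤ #Cᶜ * (r + 1) := by
        rw [hCc]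
        gcongr
        exact_mod_cast hC
    _ ≤ ∑ v ∈ Cᶜ, (hammingDist c (x v) : ℝ) := by
        rw [smul_eq_mul] at hfar
        exact_mod_cast hfar
    _ ≤ ∑ v, (hammingDist c (x v) : ℝ) :=
        sum_le_sum_of_subset_of_nonneg (subset_univ _) fun _ _ _ => by positivity

lemma card_mul_sub_mul_le_sum_card_mul (hx : Function.Injective x) (b : Fin d → Bool) (r : ℕ) :
    (Fintype.card α : ℝ) * (Fintype.card α - ∑ j ∈ range (r + 1), (d.choose j : ℝ)) * (r + 1) ≤
      2 * ∑ i, (#{v | x v i = b i} : ℝ) * (Fintype.card α - #{v | x v i = b i}) := by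
  have hpairs : ∑ p : α × α, hammingDist (x p.1) (x p.2) =
      ∑ i, 2 * (#{v | x v i = b i} * #{v | x v i ≠ b i}) := by
    rw [sum_hammingDist_eq_sum_card]
    exact sum_congr rfl fun i _ => card_pairs_ne_eq (fun v => x v i) (b i)
  have hrest : ∀ i, (#{v | x v i ≠ b i} : ℝ) = Fintype.card α - #{v | x v i = b i} := by
    intro i
    rw [eq_sub_iff_add_eq, ← Nat.cast_add, add_comm, ← card_univ,
      card_filter_add_card_filter_not]
  calc (Fintype.card α : ℝ) * (Fintype.card α - ∑ j ∈ range (r + 1), (d.choose j : ℝ)) * (r + 1)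
      = ∑ u : α, (Fintype.card α - ∑ j ∈ range (r + 1), (d.choose j : ℝ)) * (r + 1) := by
        rw [sum_const, card_univ, nsmul_eq_mul, mul_assoc]
    _ ≤ ∑ u, ∑ v, (hammingDist (x u) (x v) : ℝ) :=
        sum_le_sum fun u _ => card_sub_mul_le_sum_hammingDist hx (x u) r
    _ = ∑ p : α × α, (hammingDist (x p.1) (x p.2) : ℝ) := by rw [Fintype.sum_prod_type]
    _ = ∑ i, 2 * ((#{v | x v i = b i} : ℝ) * #{v | x v i ≠ b i}) := by exact_mod_cast hpairs
    _ = _ := by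
        rw [mul_sum]
        exact sum_congr rfl fun i _ => by rw [hrest]

lemma sub_mul_le_sum_card_coord_eq {n r : ℕ} (hx : Function.Injective x)
    (hcard : Fintype.card α = 2 * n) (b : Fin d → Bool) {ε : ℝ} (hε : 0 ≤ ε)
    (h : (1 - ε ^ 2) * n * d ≤ (2 * n - ∑ j ∈ range (r + 1), (d.choose j : ℝ)) * (r + 1)) :
    (1 - ε) * n * d ≤ ∑ i, (#{v | x v i = b i} : ℝ) := by
  have hspread := card_mul_sub_mul_le_sum_card_mul hx b r
  rw [hcard] at hspread
  push_cast at hspread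
  simpa using sub_mul_card_le_sum_of_le_sum_mul_sub univ (fun i => (#{v | x v i = b i} : ℝ))
    (Nat.cast_nonneg n) hε
    (by rw [card_univ, Fintype.card_fin]; nlinarith [Nat.cast_nonneg (α := ℝ) n])

lemma exists_card_filter_eq_le {n : ℕ} (hcard : Fintype.card α = 2 * n) (c : α → Bool) :
    ∃ b, #{v | c v = b} ≤ n := by
  by_cases h : #{v | c v = true} ≤ n
  · exact ⟨true, h⟩
  · refine ⟨false, ?_⟩
    have := card_filter_add_card_filter_not (s := univ) fun v => c v = true
    simp only [Bool.not_eq_true, card_univ] at this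
    omega

end Pairs

/-- Let `G` be a 3-regular graph on `2n` vertices with `45·2^d/d ≤ 2n ≤ 50·2^d/d`, satisfying
`|N(S)| ≥ 0.18|S|` for all `S ⊆ V(G)` with `|S| ≤ n`. Then, for all sufficiently large `d`,
`G` is not a minor of the hypercube `Q_d`. -/
theorem stmt_14 :
    ∃ D : ℕ, ∀ d ≥ D, ∀ (n : ℕ) (α : Type) (_ : Fintype α) (G : SimpleGraph α)
      (_ : DecidableRel G.Adj),
      Fintype.card α = 2 * n →
      (∀ v, G.degree v = 3) →
      (45 * 2 ^ d / d : ℝ) ≤ (2 * n : ℝ) → (2 * n : ℝ) ≤ (50 * 2 ^ d / d : ℝ) →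
      (∀ S : Set α, Nat.card S ≤ n →
        (0.18 : ℝ) * (Nat.card S : ℝ) ≤ (Nat.card (extNbhd G S) : ℝ)) →
      ¬ IsMinor G (hypercube d) := by
  obtain ⟨D, hD⟩ := Filter.eventually_atTop.1 <|
    (eventually_sum_range_choose_mul_le (ε := 0.45) (by norm_num)).and
      (Filter.eventually_ge_atTop 1)
  refine ⟨D, fun d hd n α _ G _ hcard hdeg hlow _ hexp hminor => ?_⟩
  obtain ⟨hV, hd1⟩ := hD d hd
  obtain ⟨x, hx, hlen⟩ := hminor.exists_injective_sum_hammingDist_le fun v => (hdeg v).le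
  choose b hb using fun i => exists_card_filter_eq_le hcard fun v => x v i
  have hcut := mul_sum_card_le_sum_hammingDist_of_expansion hexp x b hb
  have hdpos : (0 : ℝ) < d := by exact_mod_cast hd1
  have hlow' : 45 * 2 ^ d ≤ 2 * n * (d : ℝ) := by rwa [div_le_iff₀ hdpos] at hlow
  have hnpos : (0 : ℝ) < n := by nlinarith [pow_pos (two_pos (α := ℝ)) d]
  set V := ∑ j ∈ range (12 * d / 25 + 1), (d.choose j : ℝ)
  have hVn : V ≤ 0.02 * n := le_of_mul_le_mul_right (by nlinarith) hdpos
  have hr : 12 / 25 * (d : ℝ) ≤ (12 * d / 25 : ℕ) + 1 := by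
    rw [div_mul_eq_mul_div, div_le_iff₀ (by norm_num)]
    exact_mod_cast (by omega : 12 * d ≤ (12 * d / 25 + 1) * 25)
  have hspread : 1.98 * n * (12 / 25 * (d : ℝ)) ≤ (2 * n - V) * ((12 * d / 25 : ℕ) + 1) :=
    mul_le_mul (by linarith) hr (by positivity) (by linarith)
  have hM := sub_mul_le_sum_card_coord_eq hx hcard b (r := 12 * d / 25) (ε := 0.223)
    (by norm_num) (by nlinarith)
  have hlen' : ((∑ p ∈ ({p | G.Adj p.1 p.2} : Finset (α × α)), hammingDist (x p.1) (x p.2) : ℕ)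
      : ℝ) ≤ 6 * 2 ^ d := by exact_mod_cast hlen
  linarith [mul_pos hnpos hdpos]
end
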